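/- Suppose A₁,…,Aₙ are real 2×2 matrices that commute pairwise and satisfy A₁ᵀA₁ + ⋯ + AₙᵀAₙ = R·I₂ for some R > 0. Then A₁,…,Aₙ are simultaneously unitarily diagonalizable over ℂ: there exists a unitary 2×2 complex matrix P and diagonal complex matrices D₁,…,Dₙ such that Aᵢ = P Dᵢ P* for all i. -/

import Mathlib

/-!
Identify `ℝ²` with `ℂ`, so that a real `2 × 2` matrix acts as `x ↦ z x + q x̄`. Two such matrices
commute only if `q₂ Im z₁ = q₁ Im z₂`, and `AᵀA` has anticonformal part `2 z̄ q`, so the hypothesis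
says `∑ z̄ᵢ qᵢ = 0`. If some `Im zᵢ ≠ 0`, the `qᵢ` are real multiples `Im zᵢ • c`, and
`Im (∑ Im zᵢ • z̄ᵢ) = -∑ (Im zᵢ)² < 0` forces `c = 0`. Hence either some `Aᵢ` is symmetric and not
scalar, or every `qᵢ` vanishes, i.e. every `Aᵢ` commutes with the Hermitian matrix
`!![0, i; -i, 0]`. Either way the family commutes with a Hermitian matrix with two distinct
eigenvalues, and the unitary of its eigenvectors diagonalizes every member of the family.
-/

open Matrix ComplexConjugate

namespace Matrix

theorem isDiag_of_commute_diagonal {n α : Type*} [Fintype n] [DecidableEq n] [CommRing α]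
    [NoZeroDivisors α] {M : Matrix n n α} {d : n → α} (hd : Function.Injective d)
    (h : Commute M (diagonal d)) : M.IsDiag := by
  intro i j hij
  have hij' := congrFun (congrFun h.eq i) j
  rw [mul_diagonal, diagonal_mul] at hij'
  have : M i j * (d j - d i) = 0 := by linear_combination hij'
  exact (mul_eq_zero.mp this).resolve_right (sub_ne_zero.mpr (hd.ne hij).symm)

theorem IsHermitian.exists_unitary_isDiag_of_commute {𝕜 n ι : Type*} [RCLike 𝕜] [Fintype n]
    [DecidableEq n] {H : Matrix n n 𝕜} (hH : H.IsHermitian)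
    (hinj : Function.Injective hH.eigenvalues) {A : ι → Matrix n n 𝕜}
    (hA : ∀ i, Commute (A i) H) :
    ∃ P : Matrix n n 𝕜, Pᴴ * P = 1 ∧ ∀ i, ∃ D : Matrix n n 𝕜, D.IsDiag ∧ A i = P * D * Pᴴ := by
  set U := hH.eigenvectorUnitary
  refine ⟨U, Unitary.coe_star_mul_self U, fun i => ⟨star (U : Matrix n n 𝕜) * A i * U, ?_, ?_⟩⟩
  · have h := (hA i).map (Unitary.conjStarAlgAut 𝕜 _ (star U))
    rw [hH.conjStarAlgAut_star_eigenvectorUnitary, Unitary.conjStarAlgAut_star_apply] at h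
    exact isDiag_of_commute_diagonal (RCLike.ofReal_injective.comp hinj) h
  · have hU : (U : Matrix n n 𝕜) * star (U : Matrix n n 𝕜) = 1 := Unitary.mul_star_self_of_mem U.2
    rw [← star_eq_conjTranspose]
    simp only [← mul_assoc, hU, one_mul]
    rw [mul_assoc, hU, mul_one]

theorem IsHermitian.injective_eigenvalues_of_ne_smul_one {𝕜 : Type*} [RCLike 𝕜]
    {H : Matrix (Fin 2) (Fin 2) 𝕜} (hH : H.IsHermitian) (h : ∀ c : 𝕜, H ≠ c • 1) :
    Function.Injective hH.eigenvalues := by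
  suffices hH.eigenvalues 0 ≠ hH.eigenvalues 1 by
    intro i j hij
    fin_cases i <;> fin_cases j <;> simp_all [eq_comm]
  intro h01
  apply h (hH.eigenvalues 0)
  have hscalar : diagonal (RCLike.ofReal ∘ hH.eigenvalues) =
      (hH.eigenvalues 0 : 𝕜) • (1 : Matrix (Fin 2) (Fin 2) 𝕜) := by
    ext a b; fin_cases a <;> fin_cases b <;> simp [h01]
  refine hH.spectral_theorem.trans ?_
  rw [hscalar, map_smul, map_one]

/-- `conformalPart M` and `anticonformalPart M` are `2z` and `2q`, where `M` acts on `ℝ² ≅ ℂ` as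
`x ↦ z x + q x̄`. -/
def conformalPart (M : Matrix (Fin 2) (Fin 2) ℝ) : ℂ := ⟨M 0 0 + M 1 1, M 1 0 - M 0 1⟩

def anticonformalPart : Matrix (Fin 2) (Fin 2) ℝ →+ ℂ :=
  AddMonoidHom.mk' (fun M => ⟨M 0 0 - M 1 1, M 0 1 + M 1 0⟩) fun M N => by
    apply Complex.ext <;> simp only [add_apply, Complex.add_re, Complex.add_im] <;> ring

theorem anticonformalPart_eq_zero_iff {M : Matrix (Fin 2) (Fin 2) ℝ} :
    anticonformalPart M = 0 ↔ M 1 1 = M 0 0 ∧ M 1 0 = -M 0 1 := by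
  simp only [anticonformalPart, AddMonoidHom.mk'_apply, Complex.ext_iff, Complex.zero_re,
    Complex.zero_im]
  constructor <;> rintro ⟨h1, h2⟩ <;> constructor <;> linarith

theorem anticonformalPart_transpose_mul_self (M : Matrix (Fin 2) (Fin 2) ℝ) :
    anticonformalPart (Mᵀ * M) = conj (conformalPart M) * anticonformalPart M := by
  apply Complex.ext <;>
    simp [anticonformalPart, conformalPart, mul_apply, Fin.sum_univ_two] <;> ring

theorem anticonformalPart_mul_im_eq_of_commute {M N : Matrix (Fin 2) (Fin 2) ℝ}
    (h : M * N = N * M) :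
    anticonformalPart N * (conformalPart M).im = anticonformalPart M * (conformalPart N).im := by
  have h00 := congrFun (congrFun h 0) 0
  have h01 := congrFun (congrFun h 0) 1
  have h10 := congrFun (congrFun h 1) 0
  simp only [mul_apply, Fin.sum_univ_two] at h00 h01 h10
  apply Complex.ext <;>
    simp only [anticonformalPart, conformalPart, AddMonoidHom.mk'_apply, Complex.ofReal_sub,
      Complex.mul_re, Complex.mul_im, Complex.sub_re, Complex.sub_im, Complex.ofReal_re,
      Complex.ofReal_im, sub_self, mul_zero, sub_zero, zero_add]
  · linear_combination h10 + h01
  · linear_combination -2 * h00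

theorem anticonformalPart_smul_one (r : ℝ) : anticonformalPart (r • 1) = 0 := by
  apply Complex.ext <;> simp [anticonformalPart]

theorem isHermitian_map_ofReal_of_conformalPart_im_eq_zero {M : Matrix (Fin 2) (Fin 2) ℝ}
    (h : (conformalPart M).im = 0) : (M.map Complex.ofReal).IsHermitian := by
  have : M 1 0 = M 0 1 := sub_eq_zero.mp h
  ext i j; fin_cases i <;> fin_cases j <;> simp [this]

theorem anticonformalPart_eq_zero_of_map_ofReal_eq_smul_one {M : Matrix (Fin 2) (Fin 2) ℝ}
    {c : ℂ} (h : M.map Complex.ofReal = c • 1) : anticonformalPart M = 0 := by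
  have h00 := congrFun (congrFun h 0) 0
  have h11 := congrFun (congrFun h 1) 1
  have h01 := congrFun (congrFun h 0) 1
  have h10 := congrFun (congrFun h 1) 0
  simp only [map_apply, smul_apply, one_apply_eq, one_apply_ne, smul_eq_mul, mul_one, mul_zero,
    ne_eq, zero_ne_one, one_ne_zero, not_false_eq_true, Complex.ofReal_eq_zero] at h00 h11 h01 h10
  exact anticonformalPart_eq_zero_iff.mpr
    ⟨by exact_mod_cast h11.trans h00.symm, by simp [h01, h10]⟩

theorem commute_map_ofReal_of_anticonformalPart_eq_zero {M : Matrix (Fin 2) (Fin 2) ℝ}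
    (h : anticonformalPart M = 0) :
    Commute (M.map Complex.ofReal) !![0, Complex.I; -Complex.I, 0] := by
  obtain ⟨hd, hc⟩ := anticonformalPart_eq_zero_iff.mp h
  rw [commute_iff_eq]
  ext i j; fin_cases i <;> fin_cases j <;> simp [mul_apply, hd, hc, mul_comm]

end Matrix

theorem Complex.eq_zero_of_sum_conj_mul_eq_zero {ι : Type*} [Fintype ι] {z q : ι → ℂ}
    (hpar : ∀ i j, q j * (z i).im = q i * (z j).im) (hsum : ∑ i, conj (z i) * q i = 0)
    {i₀ : ι} (hi₀ : (z i₀).im ≠ 0) (j : ι) : q j = 0 := by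
  set c := q i₀ / (z i₀).im
  have hq : ∀ j, q j = (z j).im * c := fun j => by
    have : ((z i₀).im : ℂ) ≠ 0 := by exact_mod_cast hi₀
    rw [mul_div_assoc', eq_div_iff this]
    linear_combination hpar i₀ j
  have hne : ∑ j, ((z j).im : ℂ) * conj (z j) ≠ 0 := by
    intro h0
    have him : ∑ j, (z j).im ^ 2 = 0 := by
      simpa [Complex.im_sum, sq] using congrArg Complex.im h0
    exact hi₀ <| pow_eq_zero_iff two_ne_zero |>.mp <|
      (Finset.sum_eq_zero_iff_of_nonneg fun j _ => sq_nonneg _).mp him i₀ (Finset.mem_univ _)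
  have hc : c = 0 := by
    refine (mul_eq_zero.mp ?_).resolve_left hne
    rw [Finset.sum_mul, ← hsum]
    exact Finset.sum_congr rfl fun j _ => by rw [hq j]; ring
  rw [hq j, hc, mul_zero]

theorem stmt_3_general (n : ℕ) (A : Fin n → Matrix (Fin 2) (Fin 2) ℝ)
    (hcomm : ∀ i j, A i * A j = A j * A i) (R : ℝ)
    (hsum : ∑ i, (A i)ᵀ * A i = R • (1 : Matrix (Fin 2) (Fin 2) ℝ)) :
    ∃ P : Matrix (Fin 2) (Fin 2) ℂ, Pᴴ * P = 1 ∧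
      ∀ i, ∃ D : Matrix (Fin 2) (Fin 2) ℂ, D.IsDiag ∧
        (A i).map Complex.ofReal = P * D * Pᴴ := by
  have hsum' : ∑ i, conj (conformalPart (A i)) * anticonformalPart (A i) = 0 := by
    simp_rw [← anticonformalPart_transpose_mul_self, ← map_sum, hsum, anticonformalPart_smul_one]
  by_cases hsym : ∃ i₀, (conformalPart (A i₀)).im = 0 ∧ anticonformalPart (A i₀) ≠ 0
  · obtain ⟨i₀, him, hq⟩ := hsym
    have hH := isHermitian_map_ofReal_of_conformalPart_im_eq_zero him
    exact hH.exists_unitary_isDiag_of_commute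
      (hH.injective_eigenvalues_of_ne_smul_one fun c hc =>
        hq (anticonformalPart_eq_zero_of_map_ofReal_eq_smul_one hc))
      fun i => (show Commute (A i) (A i₀) from hcomm i i₀).map Complex.ofRealHom.mapMatrix
  · push Not at hsym
    have hq : ∀ i, anticonformalPart (A i) = 0 := fun i => by
      by_cases hi : (conformalPart (A i)).im = 0
      · exact hsym i hi
      · exact Complex.eq_zero_of_sum_conj_mul_eq_zero
          (fun i j => anticonformalPart_mul_im_eq_of_commute (hcomm i j)) hsum' hi i
    have hH : (!![0, Complex.I; -Complex.I, 0]).IsHermitian := by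
      ext i j; fin_cases i <;> fin_cases j <;> simp
    exact hH.exists_unitary_isDiag_of_commute
      (hH.injective_eigenvalues_of_ne_smul_one fun c hc => by
        simpa using congrFun (congrFun hc 0) 1)
      fun i => commute_map_ofReal_of_anticonformalPart_eq_zero (hq i)

theorem stmt_3 (n : ℕ) (A : Fin n → Matrix (Fin 2) (Fin 2) ℝ)
    (hcomm : ∀ i j, A i * A j = A j * A i) (R : ℝ) (hR : 0 < R)
    (hsum : ∑ i, (A i)ᵀ * A i = R • (1 : Matrix (Fin 2) (Fin 2) ℝ)) :
    ∃ P : Matrix (Fin 2) (Fin 2) ℂ, Pᴴ * P = 1 ∧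
      ∀ i, ∃ D : Matrix (Fin 2) (Fin 2) ℂ, D.IsDiag ∧
        (A i).map Complex.ofReal = P * D * Pᴴ :=
  stmt_3_general n A hcomm R hsum
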